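/- arXiv:2102.10876 — 2 statements merged into one kernel-verified Lean document; each statement's English description precedes it below -/
import Mathlib

section
/- Let G be a finite group with |G| > 1, let C be a transitive inverse-closed generating set of G, and write Φ = Φ(G;C). Then there exist k ≥ 1 and N_1, …, N_k ∈ A_max(G;C) such that: (i) Φ = ⋂_{i=1}^k N_i and the map gΦ ↦ (gN_1, …, gN_k) is a group isomorphism from G/Φ onto the direct product ∏_{i=1}^k G/N_i; (ii) for each i ≤ k, the quotient G/N_i is a nontrivial characteristically simple group (its only characteristic subgroups are the trivial subgroup and the whole group), the image CN_i/N_i is a transitive inverse-closed generating set of G/N_i, and A(G/N_i; CN_i/N_i) consists only of the trivial subgroup. -/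
/-!
Since `C` is the union of one `Aut(G;C)`-orbit and its inverse and generates `G`, no member of
`A(G;C)` meets `C`. Any member `N` of `A_max(G;C)` together with an invariant normal subgroup not
contained in it generates `G`. Choosing an irredundant finite family `N₁, …, N_k` in `A_max(G;C)`
with intersection `Φ(G;C)`, each `Nᵢ` and `⋂_{j ≠ i} Nⱼ` thus generate `G`, and the Chinese
remainder argument makes `G/Φ → ∏ G/Nᵢ` an isomorphism. Automorphisms in `Aut(G;C)` descend to
`Aut(G/Nᵢ; CNᵢ/Nᵢ)`, which transports transitivity, and invariant subgroups of `G/Nᵢ` pull back to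
invariant subgroups containing `Nᵢ`, so maximality of `Nᵢ` forces `A(G/Nᵢ; CNᵢ/Nᵢ) = {1}`; a
characteristic subgroup is normal and invariant, hence trivial or everything.
-/

namespace NETCayley

variable {G : Type*} [Group G]

/-- `Aut(G;C)`: the subgroup of `MulAut G` consisting of automorphisms `σ` with `C^σ = C`. -/
def autSub (C : Set G) : Subgroup (MulAut G) where
  carrier := {σ : MulAut G | ⇑σ '' C = C}
  one_mem' := by simp
  mul_mem' := by
    intro a b ha hb
    rw [Set.mem_setOf_eq] at ha hb ⊢
    have h : ⇑(a * b) = ⇑a ∘ ⇑b := rfl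
    rw [h, Set.image_comp, hb, ha]
  inv_mem' := by
    intro a ha
    rw [Set.mem_setOf_eq] at ha ⊢
    conv_lhs => rw [← ha]
    rw [← Set.image_comp]
    have h : ⇑a⁻¹ ∘ ⇑a = id := by funext x; simp
    rw [h, Set.image_id]

/-- `A(G;C)`: proper normal `Aut(G;C)`-invariant subgroups of `G`. -/
def setA (C : Set G) : Set (Subgroup G) :=
  {N | N.Normal ∧ N ≠ ⊤ ∧ ∀ σ ∈ autSub C, N.map (σ : MulAut G).toMonoidHom = N}

/-- `A_max(G;C)`: maximal (by inclusion) elements of `A(G;C)`. -/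
def setAmax (C : Set G) : Set (Subgroup G) :=
  {N | N ∈ setA C ∧ ∀ M ∈ setA C, N ≤ M → N = M}

/-- `Φ(G;C)`: the intersection of all members of `A_max(G;C)`. -/
def PhiC (C : Set G) : Subgroup G := sInf (setAmax C)

/-- `X` is normal `C`-closed: `(x^g)^σ ∈ X` for all `x ∈ X`, `g ∈ G`, `σ ∈ Aut(G;C)`. -/
def NormalCClosed (C X : Set G) : Prop :=
  ∀ x ∈ X, ∀ g : G, ∀ σ ∈ autSub C, σ (g⁻¹ * x * g) ∈ X

/-- The normal `C`-closure of `X`: `{(x^g)^σ : x ∈ X, g ∈ G, σ ∈ Aut(G;C)}`. -/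
def normalCClosure (C X : Set G) : Set G :=
  {y | ∃ x ∈ X, ∃ g : G, ∃ σ ∈ autSub C, σ (g⁻¹ * x * g) = y}

/-- The orbit of `c` under the natural action of `Aut(G;C)`. -/
def orbitC (C : Set G) (c : G) : Set G := {y | ∃ σ ∈ autSub C, σ c = y}

/-- `C` is a transitive set: either `Aut(G;C)` is transitive on `C`, or there are exactly two
orbits `C₊`, `C₋` on `C` with `C = C₊ ∪ C₋` and `C₋ = C₊⁻¹`. -/
def TransSet (C : Set G) : Prop :=
  (∀ c ∈ C, ∀ c' ∈ C, ∃ σ ∈ autSub C, σ c = c') ∨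
  (∃ cp ∈ C, ∃ cm ∈ C, orbitC C cp ≠ orbitC C cm ∧
    C = orbitC C cp ∪ orbitC C cm ∧ orbitC C cm = (orbitC C cp)⁻¹)

/-- A transitive inverse-closed generating set of `G`. -/
def IsTransGenSet (C : Set G) : Prop :=
  (1 : G) ∉ C ∧ (∀ c ∈ C, c⁻¹ ∈ C) ∧ Subgroup.closure C = ⊤ ∧ TransSet C

end NETCayley

theorem Fin.iInf_succAbove_eq_iInf_ne {α : Type*} [CompleteLattice α] {m : ℕ} (a : Fin (m + 1) → α)
    (i : Fin (m + 1)) : ⨅ j, a (i.succAbove j) = ⨅ (j) (_ : j ≠ i), a j := by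
  rw [← iInf_range (g := a), Fin.range_succAbove]
  rfl

theorem exists_irredundant_fin_family_iInf_eq {α : Type*} [CompleteLattice α] {S : Set α} :
    ∀ {k : ℕ} (a : Fin k → α), (∀ i, a i ∈ S) →
      ∃ (l : ℕ) (b : Fin l → α), (∀ i, b i ∈ S) ∧ ⨅ i, b i = ⨅ i, a i ∧
        ∀ i, ¬ (⨅ (j) (_ : j ≠ i), b j) ≤ b i
  | 0, a, ha => ⟨0, a, ha, rfl, fun i => i.elim0⟩
  | m + 1, a, ha => by
    by_cases hred : ∃ i, (⨅ (j) (_ : j ≠ i), a j) ≤ a i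
    · obtain ⟨i, hi⟩ := hred
      obtain ⟨l, b, hb, hinf, hirr⟩ := exists_irredundant_fin_family_iInf_eq (a ∘ i.succAbove) fun j => ha _
      refine ⟨l, b, hb, ?_, hirr⟩
      rw [hinf, iInf_split_single a i, inf_eq_right.mpr hi]
      exact Fin.iInf_succAbove_eq_iInf_ne a i
    · exact ⟨m + 1, a, ha, rfl, not_exists.mp hred⟩

theorem Set.Finite.exists_irredundant_iInf_eq_sInf {α : Type*} [CompleteLattice α] {S : Set α}
    (hS : S.Finite) :
    ∃ (k : ℕ) (a : Fin k → α), (∀ i, a i ∈ S) ∧ ⨅ i, a i = sInf S ∧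
      ∀ i, ¬ (⨅ (j) (_ : j ≠ i), a j) ≤ a i := by
  obtain ⟨k, f, hf⟩ := hS.fin_embedding
  obtain ⟨l, b, hb, hinf, hirr⟩ := exists_irredundant_fin_family_iInf_eq f fun i => hf ▸ Set.mem_range_self i
  exact ⟨l, b, hb, by rw [hinf, ← hf, sInf_range], hirr⟩

section ChineseRemainder

variable {G : Type*} [Group G]

instance Subgroup.normal_iInf {ι : Sort*} (N : ι → Subgroup G) [∀ i, (N i).Normal] :
    (⨅ i, N i).Normal :=
  Subgroup.normal_iInf_normal inferInstance

theorem QuotientGroup.exists_mem_mk_eq_of_sup_eq_top {N H : Subgroup G} [N.Normal] (h : N ⊔ H = ⊤)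
    (q : G ⧸ N) : ∃ y ∈ H, (y : G ⧸ N) = q := by
  obtain ⟨a, rfl⟩ := QuotientGroup.mk_surjective q
  have ha : a ∈ Subgroup.comap (QuotientGroup.mk' N) (H.map (QuotientGroup.mk' N)) := by
    rw [QuotientGroup.comap_map_mk', h]
    exact Subgroup.mem_top a
  exact ha

theorem QuotientGroup.pi_mk'_surjective {ι : Type*} [Finite ι] (N : ι → Subgroup G)
    [∀ i, (N i).Normal] (h : ∀ i, N i ⊔ ⨅ (j) (_ : j ≠ i), N j = ⊤) :
    Function.Surjective (MonoidHom.pi fun i => QuotientGroup.mk' (N i)) := by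
  classical
  intro t
  rw [← MonoidHom.mem_range]
  refine Subgroup.pi_mem_of_mulSingle_mem t fun i => ?_
  obtain ⟨y, hy, hyt⟩ := QuotientGroup.exists_mem_mk_eq_of_sup_eq_top (h i) (t i)
  refine ⟨y, funext fun j => ?_⟩
  by_cases hji : j = i
  · subst hji
    simpa using hyt
  · have hyj : y ∈ N j := Subgroup.mem_iInf.mp (Subgroup.mem_iInf.mp hy j) hji
    simp [hji, (QuotientGroup.eq_one_iff y).mpr hyj]

theorem QuotientGroup.exists_quotient_iInf_equiv_pi {ι : Type*} [Finite ι] (N : ι → Subgroup G)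
    [∀ i, (N i).Normal] (h : ∀ i, N i ⊔ ⨅ (j) (_ : j ≠ i), N j = ⊤) :
    ∃ e : G ⧸ (⨅ i, N i) ≃* ∀ i, G ⧸ N i, ∀ g : G, e g = fun i => (g : G ⧸ N i) := by
  have hker : ⨅ i, N i = (MonoidHom.pi fun i => QuotientGroup.mk' (N i)).ker := by
    ext g
    simp [Subgroup.mem_iInf, funext_iff]
  exact ⟨(QuotientGroup.quotientMulEquivOfEq hker).trans
    (QuotientGroup.quotientKerEquivOfSurjective _ (QuotientGroup.pi_mk'_surjective N h)),
    fun g => rfl⟩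

end ChineseRemainder

namespace NETCayley

variable {G : Type*} [Group G] {C : Set G}

theorem mem_autSub {σ : MulAut G} : σ ∈ autSub C ↔ ⇑σ '' C = C := Iff.rfl

/-- `setA C` consists of the proper normal subgroups with this property. -/
def AutInvariant (C : Set G) (N : Subgroup G) : Prop :=
  ∀ σ ∈ autSub C, N.map (σ : MulAut G).toMonoidHom = N

theorem AutInvariant.apply_mem_iff {N : Subgroup G} (hN : AutInvariant C N) {σ : MulAut G}
    (hσ : σ ∈ autSub C) {g : G} : σ g ∈ N ↔ g ∈ N := by
  refine ⟨fun h => ?_, fun h => hN σ hσ ▸ Subgroup.mem_map_of_mem _ h⟩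
  rw [← hN σ⁻¹ ((autSub C).inv_mem hσ)]
  exact ⟨σ g, h, by simp⟩

theorem autInvariant_of_apply_mem {N : Subgroup G} (h : ∀ σ ∈ autSub C, ∀ g ∈ N, σ g ∈ N) :
    AutInvariant C N := by
  refine fun σ hσ => le_antisymm ?_ fun g hg => ?_
  · rintro _ ⟨g, hg, rfl⟩
    exact h σ hσ g hg
  · exact ⟨σ⁻¹ g, h σ⁻¹ ((autSub C).inv_mem hσ) g hg, by simp⟩

theorem AutInvariant.sup {N M : Subgroup G} (hN : AutInvariant C N) (hM : AutInvariant C M) :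
    AutInvariant C (N ⊔ M) := fun σ hσ => by
  rw [Subgroup.map_sup, hN σ hσ, hM σ hσ]

theorem autInvariant_iInf {ι : Sort*} {N : ι → Subgroup G} (hN : ∀ i, AutInvariant C (N i)) :
    AutInvariant C (⨅ i, N i) :=
  autInvariant_of_apply_mem fun _ hσ _ hg => Subgroup.mem_iInf.mpr fun i =>
    ((hN i).apply_mem_iff hσ).mpr (Subgroup.mem_iInf.mp hg i)

theorem sup_eq_top_of_mem_setAmax {N M : Subgroup G} (hN : N ∈ setAmax C) [M.Normal]
    (hM : AutInvariant C M) (hMN : ¬ M ≤ N) : N ⊔ M = ⊤ := by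
  have := hN.1.1
  by_contra hne
  have hsup : N ⊔ M ∈ setA C := ⟨inferInstance, hne, AutInvariant.sup hN.1.2.2 hM⟩
  exact hMN ((hN.2 _ hsup le_sup_left).symm ▸ le_sup_right)

theorem bot_mem_setA [Nontrivial G] (C : Set G) : (⊥ : Subgroup G) ∈ setA C :=
  ⟨inferInstance, bot_ne_top, fun _ _ => Subgroup.map_bot _⟩

theorem setAmax_nonempty [Finite G] [Nontrivial G] (C : Set G) : (setAmax C).Nonempty := by
  obtain ⟨N, hN⟩ := (Set.toFinite (setA C)).exists_maximal ⟨⊥, bot_mem_setA C⟩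
  exact ⟨N, hN.1, fun M hM hNM => le_antisymm hNM (hN.2 hM hNM)⟩

theorem PhiC_ne_top [Finite G] [Nontrivial G] (C : Set G) : PhiC C ≠ ⊤ := by
  obtain ⟨N, hN⟩ := setAmax_nonempty C
  exact ne_top_of_le_ne_top hN.1.2.1 (sInf_le hN)

theorem eq_bot_or_eq_top_of_setA_eq_singleton_bot (hA : setA C = {⊥}) (H : Subgroup G)
    (hH : ∀ σ : MulAut G, H.map σ.toMonoidHom = H) : H = ⊥ ∨ H = ⊤ := by
  refine or_iff_not_imp_right.mpr fun htop => ?_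
  have := Subgroup.characteristic_iff_map_eq.mpr hH
  have hHA : H ∈ setA C := ⟨inferInstance, htop, fun σ _ => hH σ⟩
  rwa [hA] at hHA

theorem mem_orbitC_self (C : Set G) (c : G) : c ∈ orbitC C c :=
  ⟨1, (autSub C).one_mem, rfl⟩

theorem orbitC_subset {c : G} (hc : c ∈ C) : orbitC C c ⊆ C := by
  rintro _ ⟨σ, hσ, rfl⟩
  exact (mem_autSub.mp hσ) ▸ Set.mem_image_of_mem σ hc

theorem orbitC_eq_of_mem {c y : G} (hy : y ∈ orbitC C c) : orbitC C y = orbitC C c := by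
  obtain ⟨σ, hσ, rfl⟩ := hy
  ext z
  constructor
  · rintro ⟨τ, hτ, rfl⟩
    exact ⟨τ * σ, (autSub C).mul_mem hτ hσ, rfl⟩
  · rintro ⟨τ, hτ, rfl⟩
    exact ⟨τ * σ⁻¹, (autSub C).mul_mem hτ ((autSub C).inv_mem hσ), by simp⟩

theorem orbitC_inv (C : Set G) (c : G) : orbitC C c⁻¹ = (orbitC C c)⁻¹ := by
  ext z
  simp only [Set.mem_inv]
  constructor
  · rintro ⟨σ, hσ, rfl⟩
    exact ⟨σ, hσ, by simp⟩
  · rintro ⟨σ, hσ, hz⟩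
    exact ⟨σ, hσ, by rw [map_inv, hz, inv_inv]⟩

theorem orbitC_union_inv_subset (hinv : ∀ c ∈ C, c⁻¹ ∈ C) {c : G} (hc : c ∈ C) :
    orbitC C c ∪ (orbitC C c)⁻¹ ⊆ C :=
  Set.union_subset (orbitC_subset hc) fun x hx => inv_inv x ▸ hinv _ (orbitC_subset hc hx)

theorem TransSet.eq_orbitC_union_inv (hT : TransSet C) (hinv : ∀ c ∈ C, c⁻¹ ∈ C) {c : G}
    (hc : c ∈ C) : C = orbitC C c ∪ (orbitC C c)⁻¹ := by
  rcases hT with htr | ⟨cp, -, cm, -, -, hC, hpm⟩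
  · exact Set.Subset.antisymm (fun x hx => Or.inl (htr c hc x hx)) (orbitC_union_inv_subset hinv hc)
  · rcases hC ▸ hc with hp | hm
    · rw [orbitC_eq_of_mem hp, ← hpm]
      exact hC
    · rw [orbitC_eq_of_mem hm]
      refine hC.trans ?_
      rw [hpm, inv_inv, Set.union_comm]

theorem transSet_of_forall_eq_orbitC_union_inv
    (h : ∀ c ∈ C, C = orbitC C c ∪ (orbitC C c)⁻¹) : TransSet C := by
  rcases C.eq_empty_or_nonempty with rfl | ⟨c, hc⟩
  · exact Or.inl fun c hc => absurd hc (Set.notMem_empty c)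
  have hCc := h c hc
  by_cases hsym : (orbitC C c)⁻¹ = orbitC C c
  · refine Or.inl fun x hx y hy => ?_
    rw [hCc, hsym, Set.union_self] at hx hy
    rwa [← orbitC_eq_of_mem hx] at hy
  · have hc' : c⁻¹ ∈ C := by
      rw [hCc]
      exact Or.inr (by simpa using mem_orbitC_self C c)
    refine Or.inr ⟨c, hc, c⁻¹, hc', ?_, ?_, orbitC_inv C c⟩ <;> rw [orbitC_inv]
    · exact Ne.symm hsym
    · exact hCc

theorem IsTransGenSet.notMem_of_mem_setA (hC : IsTransGenSet C) {N : Subgroup G}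
    (hN : N ∈ setA C) {c : G} (hc : c ∈ C) : c ∉ N := by
  obtain ⟨-, hinv, hgen, hT⟩ := hC
  intro hcN
  have horb : orbitC C c ⊆ N := by
    rintro _ ⟨σ, hσ, rfl⟩
    exact (AutInvariant.apply_mem_iff hN.2.2 hσ).mpr hcN
  have hCN : C ⊆ N := by
    rw [hT.eq_orbitC_union_inv hinv hc]
    exact Set.union_subset horb fun x hx => by simpa using N.inv_mem (horb hx)
  exact hN.2.1 (top_le_iff.mp (hgen ▸ (Subgroup.closure_le N).mpr hCN))

section Quotient

variable {N : Subgroup G} [N.Normal]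

theorem AutInvariant.exists_quotient_aut (hN : AutInvariant C N) {σ : MulAut G}
    (hσ : σ ∈ autSub C) : ∃ τ ∈ autSub (QuotientGroup.mk '' C : Set (G ⧸ N)),
      ∀ g : G, τ g = (σ g : G ⧸ N) := by
  refine ⟨QuotientGroup.congr N N σ (hN σ hσ), ?_, QuotientGroup.congr_mk N N σ (hN σ hσ)⟩
  rw [mem_autSub, ← Set.image_comp]
  have hcomm : ⇑(QuotientGroup.congr N N σ (hN σ hσ)) ∘ (QuotientGroup.mk : G → G ⧸ N)
      = QuotientGroup.mk ∘ ⇑σ :=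
    funext (QuotientGroup.congr_mk N N σ (hN σ hσ))
  rw [hcomm, Set.image_comp, mem_autSub.mp hσ]

theorem AutInvariant.image_mk_orbitC_subset (hN : AutInvariant C N) (c : G) :
    (QuotientGroup.mk '' orbitC C c : Set (G ⧸ N)) ⊆ orbitC (QuotientGroup.mk '' C) (c : G ⧸ N) := by
  rintro _ ⟨_, ⟨σ, hσ, rfl⟩, rfl⟩
  obtain ⟨τ, hτ, hτσ⟩ := hN.exists_quotient_aut hσ
  exact ⟨τ, hτ, hτσ c⟩

theorem IsTransGenSet.image_mk (hC : IsTransGenSet C) (hN : N ∈ setA C) :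
    IsTransGenSet (QuotientGroup.mk '' C : Set (G ⧸ N)) := by
  have ⟨_, hinv, hgen, hT⟩ := hC
  have hinv' : ∀ x ∈ (QuotientGroup.mk '' C : Set (G ⧸ N)), x⁻¹ ∈ QuotientGroup.mk '' C := by
    rintro _ ⟨c, hc, rfl⟩
    exact ⟨c⁻¹, hinv c hc, rfl⟩
  refine ⟨?_, hinv', ?_, transSet_of_forall_eq_orbitC_union_inv ?_⟩
  · rintro ⟨c, hc, hc1⟩
    exact hC.notMem_of_mem_setA hN hc ((QuotientGroup.eq_one_iff c).mp hc1)
  · rw [← QuotientGroup.coe_mk', ← MonoidHom.map_closure, hgen,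
      Subgroup.map_top_of_surjective _ (QuotientGroup.mk'_surjective N)]
  · rintro _ ⟨c, hc, rfl⟩
    refine Set.Subset.antisymm ?_ (orbitC_union_inv_subset hinv' ⟨c, hc, rfl⟩)
    have himg := AutInvariant.image_mk_orbitC_subset hN.2.2 c
    rintro _ ⟨x, hx, rfl⟩
    rcases hT.eq_orbitC_union_inv hinv hc ▸ hx with hx | hx
    · exact Or.inl (himg ⟨x, hx, rfl⟩)
    · exact Or.inr (himg ⟨x⁻¹, hx, rfl⟩)

theorem AutInvariant.comap_mk'_mem_setA (hN : AutInvariant C N) {M : Subgroup (G ⧸ N)}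
    (hM : M ∈ setA (QuotientGroup.mk '' C : Set (G ⧸ N))) :
    M.comap (QuotientGroup.mk' N) ∈ setA C := by
  have := hM.1
  refine ⟨Subgroup.normal_comap _, fun htop => hM.2.1 ?_,
    autInvariant_of_apply_mem fun σ hσ g hg => ?_⟩
  · rw [← Subgroup.map_comap_eq_self_of_surjective (QuotientGroup.mk'_surjective N) M, htop,
      Subgroup.map_top_of_surjective _ (QuotientGroup.mk'_surjective N)]
  · obtain ⟨τ, hτ, hτσ⟩ := hN.exists_quotient_aut hσ
    show (σ g : G ⧸ N) ∈ M
    rw [← hτσ]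
    exact (AutInvariant.apply_mem_iff hM.2.2 hτ).mpr hg

theorem setA_image_mk_eq_singleton_bot (hN : N ∈ setAmax C) :
    setA (QuotientGroup.mk '' C : Set (G ⧸ N)) = {⊥} := by
  have : Nontrivial (G ⧸ N) := QuotientGroup.nontrivial_iff.mpr hN.1.2.1
  refine Set.eq_singleton_iff_unique_mem.mpr ⟨bot_mem_setA _, fun M hM => ?_⟩
  have hNM : N = M.comap (QuotientGroup.mk' N) :=
    hN.2 _ (AutInvariant.comap_mk'_mem_setA hN.1.2.2 hM) (QuotientGroup.le_comap_mk' N M)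
  rw [← Subgroup.map_comap_eq_self_of_surjective (QuotientGroup.mk'_surjective N) M, ← hNM,
    QuotientGroup.map_mk'_self]

end Quotient

/-- There exist `k ≥ 1` and `N₁, …, N_k ∈ A_max(G;C)` with
`Φ(G;C) = ⋂ᵢ Nᵢ`, `G/Φ ≅ ∏ᵢ G/Nᵢ` via `gΦ ↦ (gN₁, …, gN_k)`, and each `G/Nᵢ` a nontrivial
characteristically simple group for which the image of `C` is a transitive inverse-closed
generating set with `A(G/Nᵢ; CNᵢ/Nᵢ) = {⊥}`. -/
theorem stmt6 {G : Type*} [Group G] [Finite G] [Nontrivial G] (C : Set G)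
    (hC : IsTransGenSet C) :
    ∃ (k : ℕ), 1 ≤ k ∧ ∃ (N : Fin k → Subgroup G) (hN : ∀ i, (N i).Normal),
      (∀ i, N i ∈ setAmax C) ∧
      PhiC C = ⨅ i, N i ∧
      (∃ e : (G ⧸ PhiC C) ≃ ∀ i, G ⧸ N i,
        ∀ g : G, e (QuotientGroup.mk g) = fun i => QuotientGroup.mk g) ∧
      (∀ i : Fin k,
        haveI := hN i
        Nontrivial (G ⧸ N i) ∧
        (∀ H : Subgroup (G ⧸ N i),
          (∀ σ : MulAut (G ⧸ N i), H.map σ.toMonoidHom = H) → H = ⊥ ∨ H = ⊤) ∧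
        IsTransGenSet (QuotientGroup.mk '' C : Set (G ⧸ N i)) ∧
        setA (QuotientGroup.mk '' C : Set (G ⧸ N i)) = {⊥}) := by
  obtain ⟨k, N, hNmax, hΦ, hirr⟩ := (Set.toFinite (setAmax C)).exists_irredundant_iInf_eq_sInf
  have hNnormal : ∀ i, (N i).Normal := fun i => (hNmax i).1.1
  have hk : 1 ≤ k := by
    refine Nat.one_le_iff_ne_zero.mpr ?_
    rintro rfl
    exact PhiC_ne_top C (hΦ.symm.trans (iInf_of_empty N))
  have hcomax : ∀ i, N i ⊔ ⨅ (j) (_ : j ≠ i), N j = ⊤ := fun i =>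
    sup_eq_top_of_mem_setAmax (hNmax i)
      (autInvariant_iInf fun j => autInvariant_iInf fun _ => (hNmax j).1.2.2) (hirr i)
  obtain ⟨e, he⟩ := QuotientGroup.exists_quotient_iInf_equiv_pi N hcomax
  refine ⟨k, hk, N, hNnormal, hNmax, hΦ.symm, ?_, fun i => ?_⟩
  · rw [show PhiC C = ⨅ i, N i from hΦ.symm]
    exact ⟨e.toEquiv, he⟩
  · have hA := setA_image_mk_eq_singleton_bot (hNmax i)
    exact ⟨QuotientGroup.nontrivial_iff.mpr (hNmax i).1.2.1,
      eq_bot_or_eq_top_of_setA_eq_singleton_bot hA, hC.image_mk (hNmax i).1, hA⟩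

end NETCayley
end

section
/- Let n ≥ 3, let G = D_{2n} = ⟨a, b | a^n = b^2 = 1, bab = a^{-1}⟩, let C be a transitive inverse-closed generating set of G, let A_0 = Aut(G;C), let r be the divisor of n with A_0 ∩ ⟨φ⟩ = ⟨φ^r⟩, and suppose C = b⟨a^r⟩ ∪ ba^i⟨a^r⟩ for some i with 1 ≤ i ≤ r-1. Then gcd(i,r) = 1, and there exists a positive integer k < n with gcd(k,n) = 1 and r dividing k+1, such that the subgroup ⟨φ^r, τ_kφ^i⟩ of A_0 acts transitively on C. In particular, if r = n (so that C = {b, ba^i}), then there exists σ ∈ Aut(G) with C^σ = {b, ba}, and Aut(G;C^σ) = ⟨τ_{n-1}φ⟩ is cyclic of order 2. -/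
/-!
Write `π : ZMod n → ZMod r` for reduction, so that `C` is the set of reflections `b a^x` with
`π x ∈ {0, i}`. If `d = gcd(i, r)`, every element of `C` lies in the proper subgroup of elements
`a^x, b a^x` with `d ∣ x`, so generation forces `d = 1`. The automorphism `φ^r` shifts `x` by `r`
and is transitive on each coset `b a^j ⟨a^r⟩`, while for `k ≡ -1 (mod r)` the automorphism
`τ_k φ^i` acts on `π x` as `s ↦ i - s`, swapping the two cosets; such a unit `k` exists because
`(ZMod n)ˣ → (ZMod r)ˣ` is surjective. When `r = n`, `τ_{i⁻¹}` maps `C = {b, b a^i}` to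
`{b, ba}`, and since an automorphism is determined by the images of `b` and `ba`, the stabiliser
of `{b, ba}` is `{1, τ_{-1} φ}`.
-/

namespace NETCayley

variable {G : Type*} [Group G]

/-- The map underlying the automorphism `τ_k φ^m` of the dihedral group:
`a^i ↦ a^{ki}`, `b a^i ↦ b a^{ki+m}`. -/
def dihMap (n : ℕ) (k m : ZMod n) : DihedralGroup n → DihedralGroup n
  | .r i => .r (k * i)
  | .sr i => .sr (k * i + m)

/-- The automorphism `τ_k φ^m` of the dihedral group (for `k` a unit mod `n`). -/
def dihAut (n : ℕ) (k : (ZMod n)ˣ) (m : ZMod n) : MulAut (DihedralGroup n) where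
  toFun := dihMap n (k : ZMod n) m
  invFun := dihMap n ((k⁻¹ : (ZMod n)ˣ) : ZMod n) (-(((k⁻¹ : (ZMod n)ˣ) : ZMod n) * m))
  left_inv := by
    have hk : ((k⁻¹ : (ZMod n)ˣ) : ZMod n) * ((k : (ZMod n)ˣ) : ZMod n) = 1 := k.inv_mul
    rintro (i | i) <;> simp only [dihMap] <;> congr 1 <;> linear_combination (i : ZMod n) * hk
  right_inv := by
    have hk : ((k : (ZMod n)ˣ) : ZMod n) * ((k⁻¹ : (ZMod n)ˣ) : ZMod n) = 1 := k.mul_inv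
    rintro (i | i) <;> simp only [dihMap] <;> congr 1
    · linear_combination (i : ZMod n) * hk
    · linear_combination ((i : ZMod n) - m) * hk
  map_mul' := by
    rintro (i | i) (j | j) <;>
      simp only [DihedralGroup.r_mul_r, DihedralGroup.r_mul_sr, DihedralGroup.sr_mul_r,
        DihedralGroup.sr_mul_sr, dihMap] <;> congr 1 <;> ring


/-- The coset `b a^i ⟨a^r⟩ = {b a^{i + tr} : t ∈ ℤ}` of reflections in the dihedral group. -/
def reflCoset (n r i : ℕ) : Set (DihedralGroup n) :=
  {x | ∃ t : ℤ, x = DihedralGroup.sr ((i : ZMod n) + (t : ZMod n) * (r : ZMod n))}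

section Dihedral

variable {n : ℕ}

open DihedralGroup

lemma dihAut_sr (k : (ZMod n)ˣ) (m x : ZMod n) :
    dihAut n k m (sr x) = sr ((k : ZMod n) * x + m) := rfl

lemma dihAut_r (k : (ZMod n)ˣ) (m x : ZMod n) :
    dihAut n k m (r x) = r ((k : ZMod n) * x) := rfl

lemma dihAut_mul (k k' : (ZMod n)ˣ) (m m' : ZMod n) :
    dihAut n k m * dihAut n k' m' = dihAut n (k * k') ((k : ZMod n) * m' + m) := by
  ext (x | x) <;> simp only [MulAut.mul_apply, dihAut_sr, dihAut_r, Units.val_mul] <;>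
    congr 1 <;> ring

lemma dihAut_one_zero : dihAut n 1 0 = 1 := by
  ext (x | x) <;> simp [dihAut_sr, dihAut_r]

lemma dihAut_one_one_pow (m : ℕ) : dihAut n 1 1 ^ m = dihAut n 1 m := by
  induction m with
  | zero => simp [dihAut_one_zero]
  | succ m ih =>
    rw [pow_succ, ih, dihAut_mul, mul_one, Units.val_one, one_mul, Nat.cast_succ, add_comm]

variable [NeZero n]

lemma eq_one_of_apply_sr_zero_of_apply_sr_one {σ : MulAut (DihedralGroup n)}
    (h0 : σ (sr 0) = sr 0) (h1 : σ (sr 1) = sr 1) : σ = 1 := by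
  have hr1 : σ (r 1) = r 1 := by
    simpa [h0, h1] using map_mul σ (sr 0) (sr 1)
  have hr : ∀ j : ZMod n, σ (r j) = r j := fun j => by
    rw [← ZMod.natCast_zmod_val j, ← r_one_pow, map_pow, hr1]
  have hsr : ∀ j : ZMod n, σ (sr j) = sr j := fun j => by
    simpa [h0, hr j] using map_mul σ (sr 0) (r j)
  ext (j | j)
  · exact hr j
  · exact hsr j

end Dihedral

lemma mem_autSub_of_mapsTo {G : Type*} [Group G] [Finite G] {σ : MulAut G} {C : Set G}
    (h : Set.MapsTo σ C C) : σ ∈ autSub C :=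
  ((Set.toFinite C).injOn_iff_bijOn_of_mapsTo h).mp σ.injective.injOn |>.image_eq

section Cosets

open DihedralGroup

variable {n d r : ℕ}

/-- The union of the cosets `b a^j ⟨a^d⟩` of reflections for `j ∈ T`. -/
def srPreimage (hd : d ∣ n) (T : Set (ZMod d)) : Set (DihedralGroup n) :=
  sr '' (ZMod.castHom hd (ZMod d) ⁻¹' T)

def dihIndex : DihedralGroup n → ZMod n
  | .r x => x
  | .sr x => x

def indexSubgroup (S : AddSubgroup (ZMod n)) : Subgroup (DihedralGroup n) where
  carrier := {g | dihIndex g ∈ S}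
  one_mem' := show dihIndex (.r 0) ∈ S from S.zero_mem
  mul_mem' := by
    rintro (a | a) (b | b) ha hb <;>
      simp only [Set.mem_setOf_eq, r_mul_r, r_mul_sr, sr_mul_r, sr_mul_sr, dihIndex] at * <;>
      first | exact S.add_mem ha hb | exact S.sub_mem hb ha
  inv_mem' := by
    rintro (a | a) ha <;> simp only [Set.mem_setOf_eq, inv_r, inv_sr, dihIndex] at * <;>
      first | exact S.neg_mem ha | exact ha

lemma mem_indexSubgroup {S : AddSubgroup (ZMod n)} {g : DihedralGroup n} :
    g ∈ indexSubgroup S ↔ dihIndex g ∈ S := Iff.rfl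

lemma gcd_eq_one_of_closure_srPreimage_eq_top (hr : r ∣ n) (i : ℕ)
    (h : Subgroup.closure (srPreimage hr {0, (i : ZMod r)}) = ⊤) : i.gcd r = 1 := by
  have hdr : i.gcd r ∣ r := Nat.gcd_dvd_right i r
  set ρ := ZMod.castHom (hdr.trans hr) (ZMod (i.gcd r))
  have hle : Subgroup.closure (srPreimage hr {0, (i : ZMod r)}) ≤
      indexSubgroup ρ.toAddMonoidHom.ker := by
    rw [Subgroup.closure_le]
    rintro _ ⟨x, hx, rfl⟩
    rw [SetLike.mem_coe, mem_indexSubgroup, dihIndex, AddMonoidHom.mem_ker]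
    change ρ x = 0
    rw [show ρ = (ZMod.castHom hdr _).comp (ZMod.castHom hr _) from
      (ZMod.castHom_comp hdr hr).symm, RingHom.comp_apply]
    rcases hx with hx | hx <;> rw [hx]
    · exact map_zero _
    · rw [map_natCast, ZMod.natCast_eq_zero_iff]
      exact Nat.gcd_dvd_left i r
  have h1 : sr 1 ∈ indexSubgroup ρ.toAddMonoidHom.ker := hle (h ▸ Subgroup.mem_top _)
  replace h1 : ρ 1 = 0 := AddMonoidHom.mem_ker.mp h1
  rw [map_one, ← Nat.cast_one, ZMod.natCast_eq_zero_iff] at h1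
  exact Nat.dvd_one.mp h1

variable [NeZero n]

lemma exists_eq_mul_of_castHom_eq_zero (hd : d ∣ n) {z : ZMod n}
    (h : ZMod.castHom hd (ZMod d) z = 0) : ∃ t : ℕ, z = d * t := by
  rw [ZMod.castHom_apply, ZMod.cast_eq_val, ZMod.natCast_eq_zero_iff] at h
  obtain ⟨t, ht⟩ := h
  exact ⟨t, by rw [← ZMod.natCast_zmod_val z, ht, Nat.cast_mul]⟩

lemma dvd_val_add_one_of_castHom_eq_neg_one (hd : d ∣ n) {z : ZMod n}
    (h : ZMod.castHom hd (ZMod d) z = -1) : d ∣ z.val + 1 := by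
  rw [← ZMod.natCast_eq_zero_iff, Nat.cast_add, Nat.cast_one, ← ZMod.cast_eq_val,
    ← ZMod.castHom_apply (h := hd), h, neg_add_cancel]

lemma reflCoset_eq_srPreimage (hr : r ∣ n) (i : ℕ) :
    reflCoset n r i = srPreimage hr {(i : ZMod r)} := by
  ext g
  constructor
  · rintro ⟨t, rfl⟩
    refine ⟨_, ?_, rfl⟩
    simp only [Set.mem_preimage, Set.mem_singleton_iff, map_add, map_mul, map_natCast,
      map_intCast, ZMod.natCast_self, mul_zero, add_zero]
  · rintro ⟨x, hx, rfl⟩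
    obtain ⟨t, ht⟩ := exists_eq_mul_of_castHom_eq_zero hr (z := x - i) (by simp_all)
    exact ⟨t, by rw [sr.injEq]; push_cast; linear_combination ht⟩

lemma reflCoset_union_eq_srPreimage (hr : r ∣ n) (i : ℕ) :
    reflCoset n r 0 ∪ reflCoset n r i = srPreimage hr {0, (i : ZMod r)} := by
  simp only [reflCoset_eq_srPreimage hr, srPreimage, ← Set.image_union, ← Set.preimage_union,
    Nat.cast_zero, Set.singleton_union]

lemma dihAut_mem_autSub_srPreimage (hd : d ∣ n) {T : Set (ZMod d)} (k : (ZMod n)ˣ) (m : ZMod n)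
    (hT : ∀ s ∈ T, ZMod.castHom hd (ZMod d) k * s + ZMod.castHom hd (ZMod d) m ∈ T) :
    dihAut n k m ∈ autSub (srPreimage hd T) :=
  mem_autSub_of_mapsTo <| by
    rintro _ ⟨x, hx, rfl⟩
    exact ⟨_, by simpa only [Set.mem_preimage, map_add, map_mul] using hT _ hx, rfl⟩

lemma exists_pow_apply_sr_eq (hr : r ∣ n) {x y : ZMod n}
    (h : ZMod.castHom hr (ZMod r) x = ZMod.castHom hr (ZMod r) y) :
    ∃ t : ℕ, ((dihAut n 1 1 ^ r) ^ t) (sr x) = sr y := by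
  obtain ⟨t, ht⟩ :=
    exists_eq_mul_of_castHom_eq_zero hr (z := y - x) (by rw [map_sub, h, sub_self])
  refine ⟨t, ?_⟩
  rw [← pow_mul, dihAut_one_one_pow, dihAut_sr, sr.injEq]
  push_cast
  linear_combination -ht

lemma exists_mem_closure_apply_sr_eq (hr : r ∣ n) (k : (ZMod n)ˣ)
    (hk : ZMod.castHom hr (ZMod r) k = -1) (i : ℕ) {x y : ZMod n}
    (hx : ZMod.castHom hr (ZMod r) x ∈ ({0, (i : ZMod r)} : Set (ZMod r)))
    (hy : ZMod.castHom hr (ZMod r) y ∈ ({0, (i : ZMod r)} : Set (ZMod r))) :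
    ∃ σ ∈ Subgroup.closure {dihAut n 1 1 ^ r, dihAut n k i}, σ (sr x) = sr y := by
  have hφ : dihAut n 1 1 ^ r ∈ Subgroup.closure {dihAut n 1 1 ^ r, dihAut n k i} :=
    Subgroup.subset_closure (Set.mem_insert _ _)
  have hτ : dihAut n k i ∈ Subgroup.closure {dihAut n 1 1 ^ r, dihAut n k i} :=
    Subgroup.subset_closure (Set.mem_insert_of_mem _ rfl)
  by_cases hxy : ZMod.castHom hr (ZMod r) x = ZMod.castHom hr (ZMod r) y
  · obtain ⟨t, ht⟩ := exists_pow_apply_sr_eq hr hxy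
    exact ⟨_, pow_mem hφ t, ht⟩
  · have hτx : ZMod.castHom hr (ZMod r) (k * x + i) = ZMod.castHom hr (ZMod r) y := by
      simp only [map_add, map_mul, hk, map_natCast]
      rcases hx with hx | hx <;> rcases hy with hy | hy <;> simp_all
    obtain ⟨t, ht⟩ := exists_pow_apply_sr_eq hr hτx
    exact ⟨_, mul_mem (pow_mem hφ t) hτ, by rw [MulAut.mul_apply, dihAut_sr, ht]⟩

lemma closure_le_autSub_srPreimage (hr : r ∣ n) (k : (ZMod n)ˣ)
    (hk : ZMod.castHom hr (ZMod r) k = -1) (i : ℕ) :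
    Subgroup.closure {dihAut n 1 1 ^ r, dihAut n k i} ≤
      autSub (srPreimage hr {0, (i : ZMod r)}) := by
  rw [Subgroup.closure_le]
  rintro _ (rfl | rfl)
  · rw [dihAut_one_one_pow]
    refine dihAut_mem_autSub_srPreimage hr _ _ fun s hs => ?_
    simpa only [Units.val_one, map_one, one_mul, map_natCast, ZMod.natCast_self, add_zero] using hs
  · refine dihAut_mem_autSub_srPreimage hr _ _ ?_
    rintro s (rfl | rfl) <;> simp [hk]

end Cosets

section Pair

open DihedralGroup

variable {n : ℕ}

lemma reflCoset_self (i : ℕ) : reflCoset n n i = {sr (i : ZMod n)} := by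
  simp [reflCoset]

lemma exists_image_sr_pair_eq {i : ℕ} (hi : i.Coprime n) :
    ∃ σ : MulAut (DihedralGroup n), σ '' {sr 0, sr (i : ZMod n)} = {sr 0, sr 1} := by
  refine ⟨dihAut n (ZMod.unitOfCoprime i hi)⁻¹ 0, ?_⟩
  rw [Set.image_pair, dihAut_sr, dihAut_sr, ← ZMod.coe_unitOfCoprime i hi, Units.inv_mul,
    mul_zero, add_zero, add_zero]

lemma dihAut_neg_one_one_apply_sr_zero : dihAut n (-1) 1 (sr 0) = sr 1 := by
  simp [dihAut_sr]

lemma dihAut_neg_one_one_apply_sr_one : dihAut n (-1) 1 (sr 1) = sr 0 := by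
  simp [dihAut_sr]

variable [Fact (1 < n)]

lemma autSub_sr_pair : autSub {sr (0 : ZMod n), sr 1} = Subgroup.zpowers (dihAut n (-1) 1) := by
  have hne : (sr 0 : DihedralGroup n) ≠ sr 1 := by simp
  apply le_antisymm
  · intro σ (hσ : σ '' _ = _)
    have h0 : σ (sr 0) ∈ ({sr 0, sr 1} : Set (DihedralGroup n)) :=
      hσ ▸ Set.mem_image_of_mem σ (by simp)
    have h1 : σ (sr 1) ∈ ({sr 0, sr 1} : Set (DihedralGroup n)) :=
      hσ ▸ Set.mem_image_of_mem σ (by simp)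
    rcases h0 with h0 | h0 <;> rcases h1 with h1 | h1
    · exact absurd (σ.injective (h0.trans h1.symm)) hne
    · rw [eq_one_of_apply_sr_zero_of_apply_sr_one h0 h1]
      exact one_mem _
    · have hδσ : dihAut n (-1) 1 * σ = 1 := eq_one_of_apply_sr_zero_of_apply_sr_one
        (by rw [MulAut.mul_apply, h0, dihAut_neg_one_one_apply_sr_one])
        (by rw [MulAut.mul_apply, h1, dihAut_neg_one_one_apply_sr_zero])
      rw [eq_inv_of_mul_eq_one_left hδσ]
      exact inv_mem (Subgroup.mem_zpowers _)
    · exact absurd (σ.injective (h0.trans h1.symm)) hne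
  · rw [Subgroup.zpowers_le]
    refine mem_autSub_of_mapsTo ?_
    rintro _ (rfl | rfl)
    · simp [dihAut_neg_one_one_apply_sr_zero]
    · simp [dihAut_neg_one_one_apply_sr_one]

lemma card_autSub_sr_pair : Nat.card (autSub {sr (0 : ZMod n), sr 1}) = 2 := by
  rw [autSub_sr_pair, Nat.card_zpowers]
  apply orderOf_eq_prime
  · refine eq_one_of_apply_sr_zero_of_apply_sr_one ?_ ?_ <;>
      simp only [pow_two, MulAut.mul_apply, dihAut_neg_one_one_apply_sr_zero,
        dihAut_neg_one_one_apply_sr_one]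
  · intro h
    simpa [dihAut_neg_one_one_apply_sr_zero] using congrArg (· (sr 0)) h

end Pair

theorem stmt12_general (n : ℕ) (hn : 3 ≤ n) (C : Set (DihedralGroup n)) (hC : IsTransGenSet C)
    (r : ℕ) (hr : r ∣ n) (i : ℕ)
    (hCdef : C = reflCoset n r 0 ∪ reflCoset n r i) :
    Nat.gcd i r = 1 ∧
    (∃ k : ℕ, 0 < k ∧ k < n ∧ Nat.Coprime k n ∧ r ∣ (k + 1) ∧
      ∃ u : (ZMod n)ˣ, (u : ZMod n) = (k : ZMod n) ∧
        Subgroup.closure {(dihAut n 1 1) ^ r, dihAut n u (i : ZMod n)} ≤ autSub C ∧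
        ∀ c ∈ C, ∀ c' ∈ C,
          ∃ σ ∈ Subgroup.closure {(dihAut n 1 1) ^ r, dihAut n u (i : ZMod n)}, σ c = c') ∧
    (r = n → ∃ σ : MulAut (DihedralGroup n),
      ⇑σ '' C = {DihedralGroup.sr 0, DihedralGroup.sr 1} ∧
      autSub (⇑σ '' C) = Subgroup.zpowers (dihAut n (-1) 1) ∧
      Nat.card (autSub (⇑σ '' C)) = 2) := by
  have : Fact (1 < n) := ⟨by omega⟩
  have hgcd : i.gcd r = 1 := gcd_eq_one_of_closure_srPreimage_eq_top hr i <| by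
    rw [← reflCoset_union_eq_srPreimage, ← hCdef]
    exact hC.2.2.1
  refine ⟨hgcd, ?_, ?_⟩
  · obtain ⟨u, hu⟩ := ZMod.unitsMap_surjective hr (-1)
    replace hu : ZMod.castHom hr (ZMod r) u = -1 := congrArg Units.val hu
    rw [hCdef, reflCoset_union_eq_srPreimage hr]
    refine ⟨(u : ZMod n).val, ZMod.val_pos.mpr u.ne_zero, ZMod.val_lt _,
      ZMod.val_coe_unit_coprime u, dvd_val_add_one_of_castHom_eq_neg_one hr hu, u,
      (ZMod.natCast_zmod_val _).symm, closure_le_autSub_srPreimage hr u hu i, ?_⟩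
    rintro _ ⟨x, hx, rfl⟩ _ ⟨y, hy, rfl⟩
    exact exists_mem_closure_apply_sr_eq hr u hu i hx hy
  · rintro rfl
    obtain ⟨σ, hσ⟩ := exists_image_sr_pair_eq hgcd
    rw [hCdef, reflCoset_self, reflCoset_self, Nat.cast_zero, Set.singleton_union]
    exact ⟨σ, hσ, hσ ▸ autSub_sr_pair, hσ ▸ card_autSub_sr_pair⟩

/-- If `C = b⟨a^r⟩ ∪ ba^i⟨a^r⟩` is a transitive inverse-closed generating
set of `D_{2n}`, with `Aut(G;C) ∩ ⟨φ⟩ = ⟨φ^r⟩` and `1 ≤ i ≤ r-1`, then `gcd(i,r) = 1` and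
there is `k < n` coprime to `n` with `r ∣ k+1` such that `⟨φ^r, τ_k φ^i⟩ ≤ Aut(G;C)` acts
transitively on `C`; if `r = n` then `C` is equivalent to `{b, ba}`, whose stabiliser is
`⟨τ_{n-1}φ⟩ ≅ Z₂`. -/
theorem stmt12 (n : ℕ) (hn : 3 ≤ n) (C : Set (DihedralGroup n)) (hC : IsTransGenSet C)
    (r : ℕ) (hr : r ∣ n)
    (hA : autSub C ⊓ Subgroup.zpowers (dihAut n 1 1) =
      Subgroup.zpowers ((dihAut n 1 1) ^ r))
    (i : ℕ) (hi1 : 1 ≤ i) (hi2 : i ≤ r - 1)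
    (hCdef : C = reflCoset n r 0 ∪ reflCoset n r i) :
    Nat.gcd i r = 1 ∧
    (∃ k : ℕ, 0 < k ∧ k < n ∧ Nat.Coprime k n ∧ r ∣ (k + 1) ∧
      ∃ u : (ZMod n)ˣ, (u : ZMod n) = (k : ZMod n) ∧
        Subgroup.closure {(dihAut n 1 1) ^ r, dihAut n u (i : ZMod n)} ≤ autSub C ∧
        ∀ c ∈ C, ∀ c' ∈ C,
          ∃ σ ∈ Subgroup.closure {(dihAut n 1 1) ^ r, dihAut n u (i : ZMod n)}, σ c = c') ∧
    (r = n → ∃ σ : MulAut (DihedralGroup n),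
      ⇑σ '' C = {DihedralGroup.sr 0, DihedralGroup.sr 1} ∧
      autSub (⇑σ '' C) = Subgroup.zpowers (dihAut n (-1) 1) ∧
      Nat.card (autSub (⇑σ '' C)) = 2) :=
  stmt12_general n hn C hC r hr i hCdef

end NETCayley
end
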